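/- Let G(M) = (N, X, π) be the bottleneck congestion game corresponding to a congestion model M = (N, F, X, (c_f)_{f∈F}), and define ψ : X → ℝ≥0^{n·m} by ψ_{i,f}(x) = c_f(x) if f ∈ x_i and ψ_{i,f}(x) = 0 otherwise. Then for every improving move (x, (y_S, x_{−S})) of any nonempty coalition S ⊆ N, ψ(y_S, x_{−S}) is strictly sorted-lexicographically smaller than ψ(x). -/

import Mathlib

open Finset

/-- The vector `a` sorted in non-increasing order. -/
noncomputable def sortDesc {α : Type*} [LinearOrder α] {q : ℕ} (a : Fin q → α) : Fin q → α :=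
  fun i => a (Tuple.sort a i.rev)

/-- `a` is strictly sorted-lexicographically smaller than `b`. -/
def SLexLt {α : Type*} [LinearOrder α] {q : ℕ} (a b : Fin q → α) : Prop :=
  ∃ m : Fin q, (∀ i, i < m → sortDesc a i = sortDesc b i) ∧ sortDesc a m < sortDesc b m

/-- Sorted-lexicographic comparison of vectors indexed by an arbitrary finite type. -/
def SLexLtOn {α : Type*} [LinearOrder α] {ι : Type*} [Fintype ι] (a b : ι → α) : Prop :=
  SLexLt (a ∘ (Fintype.equivFin ι).symm) (b ∘ (Fintype.equivFin ι).symm)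

/-- An improving move: some nonempty coalition `S` deviates (players outside `S`
keep their strategies) and every member of `S` strictly decreases her cost. -/
def ImprovingMove {ι : Type*} {X : ι → Type*} {β : Type*} [Preorder β]
    (π : (∀ i, X i) → ι → β) (x y : ∀ i, X i) : Prop :=
  ∃ S : Finset ι, S.Nonempty ∧ (∀ i ∉ S, y i = x i) ∧ ∀ i ∈ S, π y i < π x i

/-
Sorted-lexicographic comparison is decided at the largest value among the entries that change,
so it suffices that every changed entry of `ψ(y)` lies strictly below some changed entry of `ψ(x)`.
For an entry `(i, f)` with `f ∈ y_i`, either no player newly uses `f`, so `c_f` can only have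
dropped, or some deviator `j` newly uses `f`; then `c_f(y) ≤ π_j(y) < π_j(x)`, and `π_j(x)` is the
changed entry of `ψ(x)` at the old bottleneck of `j`.
-/

section SortedLex

variable {α : Type*} [LinearOrder α]

lemma sortDesc_antitone {q : ℕ} (a : Fin q → α) : Antitone (sortDesc a) :=
  fun _ _ hij => Tuple.monotone_sort a (Fin.rev_le_rev.mpr hij)

lemma card_filter_le_sortDesc {q : ℕ} (a : Fin q → α) (w : α) :
    #{i | w ≤ sortDesc a i} = #{i | w ≤ a i} :=
  card_equiv (Fin.revPerm.trans (Tuple.sort a)) fun i => by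
    simp only [mem_filter, mem_univ, true_and]
    simp [sortDesc, Fin.revPerm]

lemma le_sortDesc_iff {q : ℕ} (a : Fin q → α) (w : α) (i : Fin q) :
    w ≤ sortDesc a i ↔ (i : ℕ) < #{j | w ≤ a j} := by
  rw [← card_filter_le_sortDesc, Tuple.lt_card_ge_iff_apply_ge_of_antitone (sortDesc_antitone a)]

lemma slexLt_of_card_le {q : ℕ} {a b : Fin q → α} (v : α)
    (hgt : ∀ w, v < w → #{i | w ≤ a i} = #{i | w ≤ b i})
    (hv : #{i | v ≤ a i} < #{i | v ≤ b i}) : SLexLt a b := by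
  have hm : #{i | v ≤ a i} < q := hv.trans_le (card_le_univ _ |>.trans_eq (Fintype.card_fin q))
  refine ⟨⟨_, hm⟩, fun i hi => eq_of_forall_le_iff fun w => ?_, ?_⟩
  · have hi : (i : ℕ) < #{i | v ≤ a i} := hi
    rw [le_sortDesc_iff, le_sortDesc_iff]
    rcases le_or_gt w v with hwv | hvw
    · have card_mono (c : Fin q → α) : #{i | v ≤ c i} ≤ #{i | w ≤ c i} :=
        card_le_card fun j => by simp only [mem_filter, mem_univ, true_and]; exact hwv.trans
      exact iff_of_true (hi.trans_le (card_mono a)) ((hi.trans hv).trans_le (card_mono b))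
    · rw [hgt w hvw]
  · have ha : sortDesc a ⟨_, hm⟩ < v :=
      lt_of_not_ge fun h => (lt_irrefl _ ((le_sortDesc_iff a v _).mp h)).elim
    exact ha.trans_le ((le_sortDesc_iff b v _).mpr hv)

lemma slexLtOn_of_card_le {ι : Type*} [Fintype ι] {a b : ι → α} (v : α)
    (hgt : ∀ w, v < w → #{i | w ≤ a i} = #{i | w ≤ b i})
    (hv : #{i | v ≤ a i} < #{i | v ≤ b i}) : SLexLtOn a b := by
  have card_reindex (c : ι → α) (w : α) :
      #{i | w ≤ (c ∘ (Fintype.equivFin ι).symm) i} = #{i | w ≤ c i} :=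
    card_equiv (Fintype.equivFin ι).symm fun i => by simp
  refine slexLt_of_card_le v (fun w hw => ?_) ?_ <;> rw [card_reindex, card_reindex]
  exacts [hgt w hw, hv]

lemma slexLtOn_of_exists_lt {ι : Type*} [Fintype ι] {a b : ι → α} (hne : ∃ p, a p ≠ b p)
    (hlt : ∀ p, a p ≠ b p → ∃ q, a q ≠ b q ∧ a p < b q) : SLexLtOn a b := by
  classical
  obtain ⟨p, hp, hmax⟩ := exists_max_image {p | a p ≠ b p} (fun p => max (a p) (b p))
    (by obtain ⟨p, hp⟩ := hne; exact ⟨p, by simpa using hp⟩)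
  simp only [mem_filter, mem_univ, true_and] at hp hmax
  have hmax_eq : max (a p) (b p) = b p := by
    obtain ⟨r, hr, hpr⟩ := hlt p hp
    have hp_lt : a p < max (a p) (b p) := hpr.trans_le ((le_max_right _ _).trans (hmax r hr))
    exact max_eq_right ((lt_max_iff.mp hp_lt).resolve_left (lt_irrefl _)).le
  have hbound : ∀ q, a q ≠ b q → a q < b p ∧ b q ≤ b p := fun q hq => by
    obtain ⟨r, hr, hqr⟩ := hlt q hq
    exact ⟨hqr.trans_le ((le_max_right _ _).trans (hmax_eq ▸ hmax r hr)),
      (le_max_right _ _).trans (hmax_eq ▸ hmax q hq)⟩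
  apply slexLtOn_of_card_le (b p)
  · intro w hw
    congr 1
    refine filter_congr fun q _ => ?_
    by_cases hq : a q = b q
    · rw [hq]
    · exact iff_of_false (fun h => ((hbound q hq).1.trans hw).not_ge h)
        (fun h => ((hbound q hq).2.trans_lt hw).not_ge h)
  · refine card_lt_card ⟨fun q => ?_, fun hsub => ?_⟩
    · simp only [mem_filter, mem_univ, true_and]
      intro hq
      by_cases heq : a q = b q
      · exact heq ▸ hq
      · exact absurd hq (hbound q heq).1.not_ge
    · have := hsub (by simp : p ∈ ({q | b p ≤ b q} : Finset ι))
      simp only [mem_filter, mem_univ, true_and] at this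
      exact (hbound p hp).1.not_ge this

end SortedLex

section BottleneckCongestion

variable {ι F : Type*} [DecidableEq F] (c : F → (ι → Finset F) → ℝ)

/-- The vector `ψ(x)` of the paper, indexed by player–facility pairs. -/
def facilityCostProfile (x : ι → Finset F) (p : ι × F) : ℝ :=
  if p.2 ∈ x p.1 then c p.2 x else 0

def IsBottleneckCost (x : ι → Finset F) (t : ι → ℝ) : Prop :=
  ∀ j, IsGreatest ((c · x) '' ↑(x j)) (t j)

variable {c}

lemma facilityCostProfile_le {x : ι → Finset F} {t : ι → ℝ} (ht : IsBottleneckCost c x t)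
    (hnn : ∀ f, 0 ≤ c f x) (j : ι) (f : F) : facilityCostProfile c x (j, f) ≤ t j := by
  unfold facilityCostProfile
  split_ifs with hf
  · exact (ht j).2 ⟨f, hf, rfl⟩
  · obtain ⟨g, -, hg⟩ := (ht j).1
    exact hg ▸ hnn g

lemma exists_facilityCostProfile_lt {x y : ι → Finset F} {s t : ι → ℝ}
    (hs : IsBottleneckCost c x s) (ht : IsBottleneckCost c y t) (hnn : ∀ f, 0 ≤ c f y)
    {j : ι} (hj : t j < s j) :
    ∃ g, facilityCostProfile c y (j, g) < facilityCostProfile c x (j, g) ∧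
      facilityCostProfile c x (j, g) = s j := by
  obtain ⟨g, hg, hgs⟩ := (hs j).1
  have hx : facilityCostProfile c x (j, g) = s j := by
    simp only [facilityCostProfile, if_pos (show g ∈ x j from hg), hgs]
  exact ⟨g, hx ▸ (facilityCostProfile_le ht hnn j g).trans_lt hj, hx⟩

lemma exists_facilityCostProfile_gt {x y : ι → Finset F} {s t : ι → ℝ} {S : Finset ι}
    (hs : IsBottleneckCost c x s) (ht : IsBottleneckCost c y t)
    (hnnx : ∀ f, 0 ≤ c f x) (hnny : ∀ f, 0 ≤ c f y)
    (hmono : ∀ f, (∀ i, f ∈ y i → f ∈ x i) → c f y ≤ c f x)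
    (hstay : ∀ i ∉ S, y i = x i) (himp : ∀ i ∈ S, t i < s i)
    (p : ι × F) (hp : facilityCostProfile c y p ≠ facilityCostProfile c x p) :
    ∃ q, facilityCostProfile c y q ≠ facilityCostProfile c x q ∧
      facilityCostProfile c y p < facilityCostProfile c x q := by
  obtain ⟨i, f⟩ := p
  by_cases hfy : f ∈ y i
  swap
  · refine ⟨(i, f), hp, ?_⟩
    have hy0 : facilityCostProfile c y (i, f) = 0 := if_neg hfy
    have hx0 : 0 ≤ facilityCostProfile c x (i, f) := by
      unfold facilityCostProfile; split_ifs
      exacts [hnnx f, le_rfl]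
    exact hy0 ▸ lt_of_le_of_ne hx0 (hy0 ▸ hp)
  have hyf : facilityCostProfile c y (i, f) = c f y := if_pos hfy
  by_cases hjoin : ∃ j, f ∈ y j ∧ f ∉ x j
  · obtain ⟨j, hjy, hjx⟩ := hjoin
    have hjS : j ∈ S := by
      by_contra hjS
      exact hjx (hstay j hjS ▸ hjy)
    obtain ⟨g, hg, hgs⟩ := exists_facilityCostProfile_lt hs ht hnny (himp j hjS)
    refine ⟨(j, g), hg.ne, ?_⟩
    calc facilityCostProfile c y (i, f) = c f y := hyf
      _ ≤ t j := (ht j).2 ⟨f, hjy, rfl⟩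
      _ < s j := himp j hjS
      _ = facilityCostProfile c x (j, g) := hgs.symm
  · push Not at hjoin
    have hxf : facilityCostProfile c x (i, f) = c f x := if_pos (hjoin i hfy)
    refine ⟨(i, f), hp, ?_⟩
    rw [hyf, hxf] at hp ⊢
    exact lt_of_le_of_ne (hmono f hjoin) hp

end BottleneckCongestion

theorem stmt_12_general {ι F : Type*} [Fintype ι] [Fintype F] [DecidableEq F]
    (Xi : ι → Finset (Finset F))
    (hstrat : ∀ i, ∀ s ∈ Xi i, s.Nonempty)
    (c : F → (ι → Finset F) → ℝ)
    (hnn : ∀ (f : F) (x : ι → Finset F), (∀ i, x i ∈ Xi i) → 0 ≤ c f x)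
    (hmono : ∀ (f : F) (x y : ι → Finset F), (∀ i, x i ∈ Xi i) → (∀ i, y i ∈ Xi i) →
      (∀ i, f ∈ x i → f ∈ y i) → c f x ≤ c f y)
    (π : (ι → Finset F) → ι → ℝ)
    (hπ : ∀ (x : ι → Finset F) (hx : ∀ j, x j ∈ Xi j) (i : ι),
      π x i = (x i).sup' (hstrat i (x i) (hx i)) (fun f => c f x)) :
    ∀ x y : ι → Finset F, (∀ i, x i ∈ Xi i) → (∀ i, y i ∈ Xi i) →
      ImprovingMove π x y →
      SLexLtOn (fun p : ι × F => if p.2 ∈ y p.1 then c p.2 y else 0)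
        (fun p : ι × F => if p.2 ∈ x p.1 then c p.2 x else 0) := by
  intro x y hx hy ⟨S, ⟨i₀, hi₀⟩, hstay, himp⟩
  have hbottleneck (z : ι → Finset F) (hz : ∀ j, z j ∈ Xi j) : IsBottleneckCost c z (π z) :=
    fun j => by
      rw [hπ z hz j]
      obtain ⟨g, hg, hgmax⟩ := exists_mem_eq_sup' (hstrat j (z j) (hz j)) (c · z)
      exact ⟨hgmax ▸ ⟨g, hg, rfl⟩, by rintro _ ⟨f, hf, rfl⟩; exact le_sup' (c · z) hf⟩
  have hs := hbottleneck x hx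
  have ht := hbottleneck y hy
  obtain ⟨g, hg, -⟩ := exists_facilityCostProfile_lt hs ht (hnn · y hy) (himp i₀ hi₀)
  exact slexLtOn_of_exists_lt ⟨(i₀, g), hg.ne⟩ <|
    exists_facilityCostProfile_gt hs ht (hnn · x hx) (hnn · y hy)
      (fun f => hmono f y x hy hx) hstay himp

/-- In a bottleneck congestion game, the function
`ψ_{i,f}(x) = c_f(x)` if `f ∈ x_i` and `0` otherwise strictly decreases in the
sorted lexicographical order along every improving move. -/
theorem stmt_12 {ι F : Type*} [Fintype ι] [Nonempty ι] [Fintype F] [DecidableEq F]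
    (Xi : ι → Finset (Finset F)) (hXi : ∀ i, (Xi i).Nonempty)
    (hstrat : ∀ i, ∀ s ∈ Xi i, s.Nonempty)
    (c : F → (ι → Finset F) → ℝ)
    (hnn : ∀ (f : F) (x : ι → Finset F), (∀ i, x i ∈ Xi i) → 0 ≤ c f x)
    (hiic : ∀ (f : F) (x y : ι → Finset F), (∀ i, x i ∈ Xi i) → (∀ i, y i ∈ Xi i) →
      (∀ i, f ∈ x i ↔ f ∈ y i) → c f x = c f y)
    (hmono : ∀ (f : F) (x y : ι → Finset F), (∀ i, x i ∈ Xi i) → (∀ i, y i ∈ Xi i) →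
      (∀ i, f ∈ x i → f ∈ y i) → c f x ≤ c f y)
    (π : (ι → Finset F) → ι → ℝ)
    (hπ : ∀ (x : ι → Finset F) (hx : ∀ j, x j ∈ Xi j) (i : ι),
      π x i = (x i).sup' (hstrat i (x i) (hx i)) (fun f => c f x)) :
    ∀ x y : ι → Finset F, (∀ i, x i ∈ Xi i) → (∀ i, y i ∈ Xi i) →
      ImprovingMove π x y →
      SLexLtOn (fun p : ι × F => if p.2 ∈ y p.1 then c p.2 y else 0)
        (fun p : ι × F => if p.2 ∈ x p.1 then c p.2 x else 0) :=
  stmt_12_general Xi hstrat c hnn hmono π hπ
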